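/- arXiv:2412.04267 — 13 statements merged into one kernel-verified Lean document; each statement's English description precedes it below -/
import Mathlib

section
/- Let A and B be n×n Hermitian positive-semidefinite complex matrices such that the column space of A is contained in the column space of B (i.e., A = B·Y for some matrix Y), and let C be an n×l complex matrix whose column space is contained in the column space of A (i.e., C = A·P for some matrix P). Let A⁺ be a Moore–Penrose pseudoinverse of A and let (A·B·A)⁺ be a Moore–Penrose pseudoinverse of A·B·A. Then (A·B·A)⁺ · (A·B·C) = A⁺ · C. -/
open Matrix
open scoped ComplexOrder

/-- If `ker f ≤ ker g`, then `g` factors through `f`. -/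
lemma aux_exists_comp_of_ker_le {K V W U : Type*} [Field K]
    [AddCommGroup V] [Module K V] [AddCommGroup W] [Module K W]
    [AddCommGroup U] [Module K U]
    (f : V →ₗ[K] W) (g : V →ₗ[K] U) (h : LinearMap.ker f ≤ LinearMap.ker g) :
    ∃ h' : W →ₗ[K] U, g = h'.comp f := by
  let q : (V ⧸ LinearMap.ker f) →ₗ[K] U := (LinearMap.ker f).liftQ g h
  obtain ⟨h', hh'⟩ := LinearMap.exists_extend
    (q.comp (f.quotKerEquivRange.symm : LinearMap.range f →ₗ[K] V ⧸ LinearMap.ker f))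
  refine ⟨h', ?_⟩
  ext v
  have h1 := LinearMap.congr_fun hh' ⟨f v, LinearMap.mem_range_self f v⟩
  have h2 : f.quotKerEquivRange.symm ⟨f v, LinearMap.mem_range_self f v⟩
      = Submodule.Quotient.mk v := f.quotKerEquivRange_symm_apply_image v _
  simp only [LinearMap.comp_apply, Submodule.subtype_apply, LinearEquiv.coe_coe, h2] at h1
  rw [LinearMap.comp_apply, h1]
  exact (Submodule.liftQ_apply _ g v).symm

/-- If every vector killed by `M` is killed by `N`, then `N = Z * M` for some `Z`. -/
lemma aux_exists_left_factor {a b c : ℕ}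
    (M : Matrix (Fin a) (Fin b) ℂ) (N : Matrix (Fin c) (Fin b) ℂ)
    (h : ∀ x, M *ᵥ x = 0 → N *ᵥ x = 0) :
    ∃ Z : Matrix (Fin c) (Fin a) ℂ, N = Z * M := by
  have hker : LinearMap.ker (Matrix.toLin' M) ≤ LinearMap.ker (Matrix.toLin' N) := by
    intro x hx
    rw [LinearMap.mem_ker, Matrix.toLin'_apply] at hx ⊢
    exact h x hx
  obtain ⟨h', hh'⟩ := aux_exists_comp_of_ker_le (Matrix.toLin' M) (Matrix.toLin' N) hker
  refine ⟨LinearMap.toMatrix' h', ?_⟩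
  apply Matrix.toLin'.injective
  rw [Matrix.toLin'_mul, Matrix.toLin'_toMatrix', hh']

/-- Theorem 1 of the supplementary material: for Hermitian PSD matrices `A`, `B` with
the column space of `A` contained in that of `B`, and `C` with column space contained
in that of `A`, one has `(A·B·A)⁺ · (A·B·C) = A⁺ · C`. -/
theorem pinv_ABA_mul_ABC_eq_pinv_A_mul_C {n l : ℕ}
    (A B : Matrix (Fin n) (Fin n) ℂ) (C : Matrix (Fin n) (Fin l) ℂ)
    (hA : A.PosSemidef) (hB : B.PosSemidef)
    (hAB : ∃ Y : Matrix (Fin n) (Fin n) ℂ, A = B * Y)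
    (hCA : ∃ P : Matrix (Fin n) (Fin l) ℂ, C = A * P)
    (Ap : Matrix (Fin n) (Fin n) ℂ)
    (hAp1 : A * Ap * A = A) (hAp2 : Ap * A * Ap = Ap)
    (hAp3 : (A * Ap)ᴴ = A * Ap) (hAp4 : (Ap * A)ᴴ = Ap * A)
    (G : Matrix (Fin n) (Fin n) ℂ)
    (hG1 : (A * B * A) * G * (A * B * A) = A * B * A)
    (hG2 : G * (A * B * A) * G = G)
    (hG3 : ((A * B * A) * G)ᴴ = (A * B * A) * G)
    (hG4 : (G * (A * B * A))ᴴ = G * (A * B * A)) :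
    G * (A * B * C) = Ap * C := by
  obtain ⟨Y, hY⟩ := hAB
  obtain ⟨P, hP⟩ := hCA
  have hAH : Aᴴ = A := hA.1
  have hBH : Bᴴ = B := hB.1
  -- A = Yᴴ * B
  have hYB : A = Yᴴ * B := by
    calc A = Aᴴ := hAH.symm
    _ = (B * Y)ᴴ := by rw [← hY]
    _ = Yᴴ * B := by rw [conjTranspose_mul, hBH]
  -- kernel inclusion 1 : ker (B*A) ≤ ker A
  have hker1 : ∀ x, (B * A) *ᵥ x = 0 → A *ᵥ x = 0 := by
    intro x hx
    rw [← mulVec_mulVec] at hx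
    have hAAx : A *ᵥ (A *ᵥ x) = 0 := by
      rw [mulVec_mulVec]
      have hAA : A * A = Yᴴ * (B * A) := by rw [← Matrix.mul_assoc, ← hYB]
      rw [hAA, ← mulVec_mulVec, ← mulVec_mulVec, hx, mulVec_zero]
    have key : star (A *ᵥ x) ⬝ᵥ (A *ᵥ x) = 0 := by
      rw [star_mulVec, hAH, ← dotProduct_mulVec, hAAx, dotProduct_zero]
    exact dotProduct_star_self_eq_zero.mp key
  -- kernel inclusion 2 : ker (A*B*A) ≤ ker (B*A)
  have hker2 : ∀ x, (A * B * A) *ᵥ x = 0 → (B * A) *ᵥ x = 0 := by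
    intro x hx
    rw [Matrix.mul_assoc, ← mulVec_mulVec, ← mulVec_mulVec] at hx
    have h0 : star (A *ᵥ x) ⬝ᵥ (B *ᵥ (A *ᵥ x)) = 0 := by
      rw [star_mulVec, hAH, ← dotProduct_mulVec, hx, dotProduct_zero]
    have hB0 := (hB.dotProduct_mulVec_zero_iff (A *ᵥ x)).mp h0
    rw [← mulVec_mulVec]
    exact hB0
  obtain ⟨W, hW⟩ := aux_exists_left_factor (B * A) A hker1
  obtain ⟨V, hV⟩ := aux_exists_left_factor (A * B * A) (B * A) hker2
  have hABAH : (A * B * A)ᴴ = A * B * A := by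
    rw [conjTranspose_mul, conjTranspose_mul, hAH, hBH, Matrix.mul_assoc]
  -- A = A * B * Wᴴ
  have hABW : A = A * B * Wᴴ := by
    have h := congrArg conjTranspose hW
    simp only [conjTranspose_mul, hAH, hBH, Matrix.mul_assoc] at h
    simp only [Matrix.mul_assoc]
    exact h
  -- A * B = (A*B*A) * Vᴴ
  have hABV : A * B = A * B * A * Vᴴ := by
    have h := congrArg conjTranspose hV
    simp only [conjTranspose_mul, hAH, hBH, Matrix.mul_assoc] at h
    simp only [Matrix.mul_assoc]
    exact h
  -- A = (A*B*A) * X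
  have hX : A = A * B * A * (Vᴴ * Wᴴ) := by
    calc A = A * B * Wᴴ := hABW
    _ = (A * B * A) * Vᴴ * Wᴴ := by rw [← hABV]
    _ = A * B * A * (Vᴴ * Wᴴ) := by rw [Matrix.mul_assoc]
  -- G * (A*B*A) = (A*B*A) * Gᴴ
  have hE' : G * (A * B * A) = A * B * A * Gᴴ := by
    conv_lhs => rw [← hG4]
    rw [conjTranspose_mul, hABAH]
  -- G*(A*B*A) * (A*B*A) = A*B*A
  have hE_ABA : G * (A * B * A) * (A * B * A) = A * B * A := by
    have h2 := congrArg conjTranspose hG1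
    simp only [conjTranspose_mul, conjTranspose_conjTranspose, hAH, hBH,
      Matrix.mul_assoc] at h2
    rw [hE']
    simp only [Matrix.mul_assoc]
    exact h2
  -- G*(A*B*A) * A = A
  have hEA : G * (A * B * A) * A = A := by
    calc G * (A * B * A) * A
        = G * (A * B * A) * (A * B * A * (Vᴴ * Wᴴ)) := by rw [← hX]
    _ = G * (A * B * A) * (A * B * A) * (Vᴴ * Wᴴ) := by simp only [Matrix.mul_assoc]
    _ = (A * B * A) * (Vᴴ * Wᴴ) := by rw [hE_ABA]
    _ = A := hX.symm
  -- Ap * A * A = A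
  have hApAA : Ap * A * A = A := by
    have h1 : (Ap * A * A)ᴴ = A := by
      rw [conjTranspose_mul, hAp4, hAH, ← Matrix.mul_assoc, hAp1]
    calc Ap * A * A = (Ap * A * A)ᴴᴴ := (conjTranspose_conjTranspose _).symm
    _ = Aᴴ := by rw [h1]
    _ = A := hAH
  -- (Ap*A) * (G*(A*B*A)) = G*(A*B*A)
  have hFE : Ap * A * (G * (A * B * A)) = G * (A * B * A) := by
    rw [hE']
    calc Ap * A * (A * B * A * Gᴴ) = Ap * A * A * (B * (A * Gᴴ)) := by
          simp only [Matrix.mul_assoc]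
    _ = A * (B * (A * Gᴴ)) := by rw [hApAA]
    _ = A * B * A * Gᴴ := by simp only [Matrix.mul_assoc]
  -- (G*(A*B*A)) * (Ap*A) = Ap*A
  have hF' : Ap * A = A * Apᴴ := by
    calc Ap * A = (Ap * A)ᴴ := hAp4.symm
    _ = Aᴴ * Apᴴ := conjTranspose_mul _ _
    _ = A * Apᴴ := by rw [hAH]
  have hEF : G * (A * B * A) * (Ap * A) = Ap * A := by
    rw [hF']
    calc G * (A * B * A) * (A * Apᴴ) = G * (A * B * A) * A * Apᴴ := by
          simp only [Matrix.mul_assoc]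
    _ = A * Apᴴ := by rw [hEA]
  -- conclude E = F
  have h6 := congrArg conjTranspose hEF
  rw [conjTranspose_mul, hG4, hAp4] at h6
  have hEeqF : G * (A * B * A) = Ap * A := hFE.symm.trans h6
  calc G * (A * B * C) = G * (A * B * (A * P)) := by rw [hP]
  _ = G * (A * B * A) * P := by simp only [Matrix.mul_assoc]
  _ = Ap * A * P := by rw [hEeqF]
  _ = Ap * C := by rw [hP, Matrix.mul_assoc]
end

section
/- Let A and B be n×n Hermitian positive-semidefinite complex matrices such that the column space of A is contained in the column space of B (i.e., A = B·Y for some matrix Y). Then rank(A·B·A) = rank(A). -/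
open Matrix
open scoped ComplexOrder

/-- For Hermitian PSD matrices `A`, `B` with the column space of `A` contained in that
of `B`, one has `rank (A·B·A) = rank A`. -/
theorem rank_ABA_eq_rank_A {n : ℕ}
    (A B : Matrix (Fin n) (Fin n) ℂ)
    (hA : A.PosSemidef) (hB : B.PosSemidef)
    (hAB : ∃ Y : Matrix (Fin n) (Fin n) ℂ, A = B * Y) :
    (A * B * A).rank = A.rank := by
  obtain ⟨Y, hY⟩ := hAB
  have hker : LinearMap.ker (A * B * A).mulVecLin = LinearMap.ker A.mulVecLin := by
    ext x
    simp only [LinearMap.mem_ker, mulVecLin_apply]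
    constructor
    · intro h
      rw [← mulVec_mulVec, ← mulVec_mulVec] at h
      -- star (A x) ⬝ B (A x) = 0
      have h1 : star (A *ᵥ x) ⬝ᵥ B *ᵥ (A *ᵥ x) = 0 := by
        have := congrArg (fun v => star x ⬝ᵥ v) h
        simp only [dotProduct_zero] at this
        rw [star_mulVec, hA.1, ← dotProduct_mulVec]
        exact this
      have h2 : B *ᵥ (A *ᵥ x) = 0 := (hB.dotProduct_mulVec_zero_iff _).mp h1
      -- A x = B (Y x), so B² (Y x) = 0, hence B (Y x) = 0, hence A x = 0
      have h3 : A *ᵥ x = B *ᵥ (Y *ᵥ x) := by rw [hY, ← mulVec_mulVec]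
      rw [h3] at h2
      have h4 : star (B *ᵥ (Y *ᵥ x)) ⬝ᵥ (B *ᵥ (Y *ᵥ x)) = 0 := by
        have : star (Y *ᵥ x) ⬝ᵥ B *ᵥ (B *ᵥ (Y *ᵥ x)) = 0 := by rw [h2, dotProduct_zero]
        rw [star_mulVec, hB.1, ← dotProduct_mulVec]
        exact this
      have h5 : B *ᵥ (Y *ᵥ x) = 0 := dotProduct_star_self_eq_zero.mp h4
      rw [h3, h5]
    · intro h
      rw [← mulVec_mulVec, ← mulVec_mulVec, h, mulVec_zero, mulVec_zero]
  have r1 := (A * B * A).mulVecLin.finrank_range_add_finrank_ker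
  have r2 := A.mulVecLin.finrank_range_add_finrank_ker
  rw [hker] at r1
  unfold Matrix.rank
  omega
end

section
/- Let A and B be n×n Hermitian positive-semidefinite complex matrices such that the column space of A is contained in the column space of B (i.e., A = B·Y for some matrix Y). Let A⁺ be a Moore–Penrose pseudoinverse of A and let (A·B·A)⁺ be a Moore–Penrose pseudoinverse of A·B·A. Then (A·B·A)⁺ · (A·B·A) = A⁺ · A, i.e., the orthogonal projection onto the row space of A·B·A equals the orthogonal projection onto the row space of A. -/
open Matrix
open scoped ComplexOrder

open scoped MatrixOrder in
lemma psd_mul_eq_zero_of {n : ℕ} {B M : Matrix (Fin n) (Fin n) ℂ}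
    (hB : B.PosSemidef) (h : Mᴴ * B * M = 0) : B * M = 0 := by
  have hs : CFC.sqrt B * CFC.sqrt B = B := CFC.sqrt_mul_sqrt_self B hB.nonneg
  have hH : (CFC.sqrt B)ᴴ = CFC.sqrt B := (CFC.sqrt_nonneg B).posSemidef.isHermitian
  have h0 : (CFC.sqrt B * M)ᴴ * (CFC.sqrt B * M) = 0 := by
    calc (CFC.sqrt B * M)ᴴ * (CFC.sqrt B * M) = Mᴴ * (CFC.sqrt B)ᴴ * (CFC.sqrt B * M) := by
          rw [conjTranspose_mul]
      _ = Mᴴ * B * M := by rw [hH]; rw [Matrix.mul_assoc, Matrix.mul_assoc, ← Matrix.mul_assoc (CFC.sqrt B), hs]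
      _ = 0 := h
  have : CFC.sqrt B * M = 0 := conjTranspose_mul_self_eq_zero.mp h0
  calc B * M = CFC.sqrt B * (CFC.sqrt B * M) := by rw [← Matrix.mul_assoc, hs]
    _ = 0 := by rw [this, Matrix.mul_zero]

/-- For Hermitian PSD matrices `A`, `B` with the column space of `A` contained in that of `B`,
the orthogonal projection onto the row space of `A·B·A` equals that onto the row space of `A`:
`(A·B·A)⁺ · (A·B·A) = A⁺ · A`. -/
theorem pinv_ABA_mul_ABA_eq_pinv_A_mul_A {n : ℕ}
    (A B : Matrix (Fin n) (Fin n) ℂ)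
    (hA : A.PosSemidef) (hB : B.PosSemidef)
    (hAB : ∃ Y : Matrix (Fin n) (Fin n) ℂ, A = B * Y)
    (Ap : Matrix (Fin n) (Fin n) ℂ)
    (hAp1 : A * Ap * A = A) (hAp2 : Ap * A * Ap = Ap)
    (hAp3 : (A * Ap)ᴴ = A * Ap) (hAp4 : (Ap * A)ᴴ = Ap * A)
    (G : Matrix (Fin n) (Fin n) ℂ)
    (hG1 : (A * B * A) * G * (A * B * A) = A * B * A)
    (hG2 : G * (A * B * A) * G = G)
    (hG3 : ((A * B * A) * G)ᴴ = (A * B * A) * G)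
    (hG4 : (G * (A * B * A))ᴴ = G * (A * B * A)) :
    G * (A * B * A) = Ap * A := by
  obtain ⟨Y, hY⟩ := hAB
  have hAH : Aᴴ = A := hA.isHermitian
  have hBH : Bᴴ = B := hB.isHermitian
  -- A = Yᴴ * B
  have hA2 : A = Yᴴ * B := by
    conv_lhs => rw [← hAH, hY]
    rw [conjTranspose_mul, hBH]
  set P := G * (A * B * A) with hP
  set M := A - A * P with hM
  -- A * B * M = 0
  have hABM : A * B * M = 0 := by
    rw [hM, Matrix.mul_sub, hP]
    rw [show A * B * (A * (G * (A * B * A))) = (A * B * A) * G * (A * B * A) by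
      simp only [Matrix.mul_assoc]]
    rw [hG1, sub_self]
  -- Mᴴ = (1 - P) * A
  have hMH : Mᴴ = (1 - P) * A := by
    rw [hM, conjTranspose_sub, conjTranspose_mul, hAH, hG4, Matrix.sub_mul,
      Matrix.one_mul]
  -- Mᴴ * B * M = 0
  have h1 : Mᴴ * B * M = 0 := by
    rw [hMH, Matrix.mul_assoc, Matrix.mul_assoc, ← Matrix.mul_assoc A B M, hABM,
      Matrix.mul_zero]
  have hBM : B * M = 0 := psd_mul_eq_zero_of hB h1
  have hAM : A * M = 0 := by rw [hA2, Matrix.mul_assoc, hBM, Matrix.mul_zero]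
  have hM0 : M = 0 := by
    have : Mᴴ * M = 0 := by rw [hMH, Matrix.mul_assoc, hAM, Matrix.mul_zero]
    exact conjTranspose_mul_self_eq_zero.mp this
  have hAP : A * P = A := (sub_eq_zero.mp hM0).symm
  have hPQ : P * (Ap * A) = P := by
    rw [hP, show G * (A * B * A) * (Ap * A) = G * (A * B * (A * Ap * A)) by
      simp only [Matrix.mul_assoc]]
    rw [show A * Ap * A = A from hAp1]
  have hQP : (Ap * A) * P = Ap * A := by
    rw [Matrix.mul_assoc, hAP]
  calc P = Pᴴ := hG4.symm
    _ = (P * (Ap * A))ᴴ := by rw [hPQ]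
    _ = (Ap * A)ᴴ * Pᴴ := by rw [conjTranspose_mul]
    _ = (Ap * A) * P := by rw [hAp4, hG4]
    _ = Ap * A := hQP
end

section
/- Let A and B be n×n Hermitian positive-semidefinite complex matrices such that the column space of A is contained in the column space of B (i.e., A = B·Y for some matrix Y), and let C be an n×l complex matrix whose column space is contained in the column space of A (i.e., C = A·P for some matrix P). Let (A·B·A)⁺ be a Moore–Penrose pseudoinverse of A·B·A. Then A · (A·B·A)⁺ · A · B · C = C. -/
open Matrix
open scoped ComplexOrder

private lemma cancel_left {m k : ℕ} (S : Matrix (Fin m) (Fin m) ℂ)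
    (X Y : Matrix (Fin m) (Fin k) ℂ)
    (h : Sᴴ * (S * X) = Sᴴ * (S * Y)) : S * X = S * Y := by
  have hD : Sᴴ * (S * (X - Y)) = 0 := by
    rw [Matrix.mul_sub, Matrix.mul_sub, h, sub_self]
  have h0 : (S * (X - Y))ᴴ * (S * (X - Y)) = 0 := by
    rw [conjTranspose_mul, Matrix.mul_assoc, hD, Matrix.mul_zero]
  have h1 := Matrix.conjTranspose_mul_self_eq_zero.mp h0
  rw [Matrix.mul_sub] at h1
  exact sub_eq_zero.mp h1

/-- Corollary of Theorem 1 of the supplementary material: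
`A · (A·B·A)⁺ · A · B · C = C`. -/
theorem A_mul_pinv_ABA_mul_ABC_eq_C {n l : ℕ}
    (A B : Matrix (Fin n) (Fin n) ℂ) (C : Matrix (Fin n) (Fin l) ℂ)
    (hA : A.PosSemidef) (hB : B.PosSemidef)
    (hAB : ∃ Y : Matrix (Fin n) (Fin n) ℂ, A = B * Y)
    (hCA : ∃ P : Matrix (Fin n) (Fin l) ℂ, C = A * P)
    (G : Matrix (Fin n) (Fin n) ℂ)
    (hG1 : (A * B * A) * G * (A * B * A) = A * B * A)
    (hG2 : G * (A * B * A) * G = G)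
    (hG3 : ((A * B * A) * G)ᴴ = (A * B * A) * G)
    (hG4 : (G * (A * B * A))ᴴ = G * (A * B * A)) :
    A * G * (A * B * C) = C := by
  obtain ⟨Y, hY⟩ := hAB
  obtain ⟨P, hP⟩ := hCA
  obtain ⟨R, hRR, hRH⟩ : ∃ R : Matrix (Fin n) (Fin n) ℂ, R * R = B ∧ Rᴴ = R := by
    open scoped MatrixOrder Matrix.Norms.L2Operator in
    exact ⟨CFC.sqrt B, CFC.sqrt_mul_sqrt_self B hB.nonneg,
      (CFC.sqrt_nonneg B).posSemidef.isHermitian⟩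
  have hAH : Aᴴ = A := hA.isHermitian
  have hA' : A = Yᴴ * (R * R) := by
    have h : Aᴴ = (B * Y)ᴴ := by rw [hY]
    rw [hAH, conjTranspose_mul, hB.isHermitian] at h
    rw [h, hRR]
  -- step 1 : (R*A)*(G*(A*B*A)) = (R*A)*1
  have s1 : (R * A) * (G * (A * B * A)) = (R * A) * 1 := by
    apply cancel_left
    have hS : (R * A)ᴴ * (R * A) = A * B * A := by
      rw [conjTranspose_mul, hRH, hAH, ← hRR]
      simp only [Matrix.mul_assoc]
    calc (R * A)ᴴ * ((R * A) * (G * (A * B * A)))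
        = ((R * A)ᴴ * (R * A)) * (G * (A * B * A)) := by
          simp only [Matrix.mul_assoc]
      _ = (A * B * A) * G * (A * B * A) := by
          rw [hS]; simp only [Matrix.mul_assoc]
      _ = (R * A)ᴴ * ((R * A) * 1) := by
          rw [hG1, Matrix.mul_one, hS]
  -- step 2 : A*(A*(G*(A*B*A))) = A*(A*1)
  have s2 : A * (A * (G * (A * B * A))) = A * (A * 1) := by
    have h := congrArg (fun M => Yᴴ * (R * M)) s1
    simp only [Matrix.mul_assoc] at h
    calc A * (A * (G * (A * B * A)))
        = Yᴴ * (R * R) * (A * (G * (A * B * A))) := by rw [← hA']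
      _ = Yᴴ * (R * (R * (A * (G * (A * (B * A)))))) := by simp only [Matrix.mul_assoc]
      _ = Yᴴ * (R * (R * (A * 1))) := h
      _ = Yᴴ * (R * R) * (A * 1) := by simp only [Matrix.mul_assoc]
      _ = A * (A * 1) := by rw [← hA']
  -- step 3 : A*(G*(A*B*A)) = A
  have key : A * (G * (A * B * A)) = A := by
    have h3 : A * (G * (A * B * A)) = A * 1 := by
      apply cancel_left
      rw [hAH]
      exact s2
    simpa using h3
  -- conclude
  rw [hP]
  have := congrArg (· * P) key
  simp only [Matrix.mul_assoc] at this ⊢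
  exact this
end

section
/- Let A be an M×M complex matrix, D an L×L Hermitian complex matrix with Moore–Penrose pseudoinverse D⁺, and B an M×L complex matrix satisfying B·D⁺·D = B. Set Σ := A − B·D⁺·Bᴴ and let Σ⁺ be a Moore–Penrose pseudoinverse of Σ. Define R := [[A, B],[Bᴴ, D]] and G := [[Σ⁺, −Σ⁺·B·D⁺],[−D⁺·Bᴴ·Σ⁺, D⁺ + D⁺·Bᴴ·Σ⁺·B·D⁺]]. Then R·G·R = R, i.e., G is a generalized inverse of R. -/
open Matrix

/-- Condition I of Section VIII of the supplementary material: the closed-form block matrix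
`G = [[Σ⁺, −Σ⁺·B·D⁺],[−D⁺·Bᴴ·Σ⁺, D⁺ + D⁺·Bᴴ·Σ⁺·B·D⁺]]` is a generalized inverse of
`R = [[A, B],[Bᴴ, D]]`, i.e. `R·G·R = R`. -/
theorem block_generalized_inverse {M L : ℕ}
    (A : Matrix (Fin M) (Fin M) ℂ) (D : Matrix (Fin L) (Fin L) ℂ)
    (B : Matrix (Fin M) (Fin L) ℂ)
    (hD : Dᴴ = D)
    (Dp : Matrix (Fin L) (Fin L) ℂ)
    (hDp1 : D * Dp * D = D) (hDp2 : Dp * D * Dp = Dp)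
    (hDp3 : (D * Dp)ᴴ = D * Dp) (hDp4 : (Dp * D)ᴴ = Dp * D)
    (hB : B * Dp * D = B)
    (Sp : Matrix (Fin M) (Fin M) ℂ)
    (hSp1 : (A - B * Dp * Bᴴ) * Sp * (A - B * Dp * Bᴴ) = A - B * Dp * Bᴴ)
    (hSp2 : Sp * (A - B * Dp * Bᴴ) * Sp = Sp)
    (hSp3 : ((A - B * Dp * Bᴴ) * Sp)ᴴ = (A - B * Dp * Bᴴ) * Sp)
    (hSp4 : (Sp * (A - B * Dp * Bᴴ))ᴴ = Sp * (A - B * Dp * Bᴴ)) :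
    fromBlocks A B Bᴴ D *
      fromBlocks Sp (-(Sp * B * Dp)) (-(Dp * Bᴴ * Sp)) (Dp + Dp * Bᴴ * Sp * B * Dp) *
        fromBlocks A B Bᴴ D = fromBlocks A B Bᴴ D := by
  -- Step 1: the Moore–Penrose pseudoinverse of a Hermitian matrix is Hermitian
  have c3 : Dpᴴ * D = D * Dp := by
    calc Dpᴴ * D = Dpᴴ * Dᴴ := by rw [hD]
    _ = (D * Dp)ᴴ := (conjTranspose_mul D Dp).symm
    _ = D * Dp := hDp3
  have c4 : Dp * D = D * Dpᴴ := by
    calc Dp * D = (Dp * D)ᴴ := hDp4.symm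
    _ = Dᴴ * Dpᴴ := conjTranspose_mul Dp D
    _ = D * Dpᴴ := by rw [hD]
  have hDDD : D * Dpᴴ * D = D := by
    have h := congrArg conjTranspose hDp1
    simp only [conjTranspose_mul, hD] at h
    rw [Matrix.mul_assoc]
    simpa [Matrix.mul_assoc] using h
  have e_a : Dp * D * D = D := by rw [c4]; exact hDDD
  have h_t : Dpᴴ = D * Dp * Dpᴴ := by
    calc Dpᴴ = (Dp * D * Dp)ᴴ := by rw [hDp2]
    _ = Dpᴴ * (Dp * D)ᴴ := by rw [conjTranspose_mul]
    _ = Dpᴴ * (Dp * D) := by rw [hDp4]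
    _ = Dpᴴ * (D * Dpᴴ) := by rw [c4]
    _ = (Dpᴴ * D) * Dpᴴ := by noncomm_ring
    _ = (D * Dp) * Dpᴴ := by rw [c3]
  have claim_Y : Dpᴴ = Dp * D * Dpᴴ := by
    calc Dpᴴ = D * (Dp * Dpᴴ) := by rw [← Matrix.mul_assoc, ← h_t]
    _ = (Dp * D * D) * (Dp * Dpᴴ) := by rw [e_a]
    _ = Dp * D * (D * Dp * Dpᴴ) := by noncomm_ring
    _ = Dp * D * Dpᴴ := by rw [← h_t]
  have h_u : Dp = Dp * (Dp * D) := by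
    calc Dp = Dpᴴᴴ := (conjTranspose_conjTranspose Dp).symm
    _ = (Dp * D * Dpᴴ)ᴴ := by rw [← claim_Y]
    _ = Dpᴴᴴ * (Dp * D)ᴴ := by rw [conjTranspose_mul]
    _ = Dp * (Dp * D) := by rw [conjTranspose_conjTranspose, hDp4]
  have hPh : Dpᴴ = Dp := by
    calc Dpᴴ = Dp * D * Dpᴴ := claim_Y
    _ = Dp * D * (Dp * D * Dpᴴ) := by rw [← claim_Y]; exact claim_Y
    _ = (Dp * D * Dp) * (D * Dpᴴ) := by noncomm_ring
    _ = Dp * (D * Dpᴴ) := by rw [hDp2]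
    _ = Dp * (Dp * D) := by rw [← c4]
    _ = Dp := h_u.symm
  -- Step 2: D * Dp * Bᴴ = Bᴴ
  have hDB : D * Dp * Bᴴ = Bᴴ := by
    calc D * Dp * Bᴴ = Dᴴ * Dpᴴ * Bᴴ := by rw [hD, hPh]
    _ = (B * Dp * D)ᴴ := by simp [conjTranspose_mul, Matrix.mul_assoc]
    _ = Bᴴ := by rw [hB]
  -- Step 3: block computation
  rw [fromBlocks_multiply, fromBlocks_multiply, fromBlocks_inj]
  refine ⟨?_, ?_, ?_, ?_⟩
  · calc (A * Sp + B * -(Dp * Bᴴ * Sp)) * A +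
        (A * -(Sp * B * Dp) + B * (Dp + Dp * Bᴴ * Sp * B * Dp)) * Bᴴ
        = (A - B * Dp * Bᴴ) * Sp * (A - B * Dp * Bᴴ) + B * Dp * Bᴴ := by
          simp only [Matrix.mul_sub, Matrix.sub_mul, Matrix.mul_add, Matrix.add_mul,
            Matrix.mul_neg, Matrix.neg_mul, Matrix.mul_assoc]
          abel
    _ = A := by rw [hSp1]; abel
  · calc (A * Sp + B * -(Dp * Bᴴ * Sp)) * B +
        (A * -(Sp * B * Dp) + B * (Dp + Dp * Bᴴ * Sp * B * Dp)) * D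
        = (A - B * Dp * Bᴴ) * Sp * B - (A - B * Dp * Bᴴ) * Sp * (B * Dp * D)
            + B * Dp * D := by
          simp only [Matrix.mul_sub, Matrix.sub_mul, Matrix.mul_add, Matrix.add_mul,
            Matrix.mul_neg, Matrix.neg_mul, Matrix.mul_assoc]
          abel
    _ = B := by rw [hB]; abel
  · calc (Bᴴ * Sp + D * -(Dp * Bᴴ * Sp)) * A +
        (Bᴴ * -(Sp * B * Dp) + D * (Dp + Dp * Bᴴ * Sp * B * Dp)) * Bᴴ
        = (Bᴴ - D * Dp * Bᴴ) * Sp * (A - B * Dp * Bᴴ) + D * Dp * Bᴴ := by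
          simp only [Matrix.mul_sub, Matrix.sub_mul, Matrix.mul_add, Matrix.add_mul,
            Matrix.mul_neg, Matrix.neg_mul, Matrix.mul_assoc]
          abel
    _ = Bᴴ := by rw [hDB]; simp
  · calc (Bᴴ * Sp + D * -(Dp * Bᴴ * Sp)) * B +
        (Bᴴ * -(Sp * B * Dp) + D * (Dp + Dp * Bᴴ * Sp * B * Dp)) * D
        = (Bᴴ - D * Dp * Bᴴ) * Sp * B - (Bᴴ - D * Dp * Bᴴ) * Sp * (B * Dp * D)
            + D * Dp * D := by
          simp only [Matrix.mul_sub, Matrix.sub_mul, Matrix.mul_add, Matrix.add_mul,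
            Matrix.mul_neg, Matrix.neg_mul, Matrix.mul_assoc]
          abel
    _ = D := by rw [hDB, hB, hDp1]; simp
end

section
/- Let A be an M×M complex matrix, D an L×L Hermitian complex matrix with Moore–Penrose pseudoinverse D⁺, and B an M×L complex matrix satisfying B·D⁺·D = B. Set Σ := A − B·D⁺·Bᴴ and let Σ⁺ be a Moore–Penrose pseudoinverse of Σ. Define R := [[A, B],[Bᴴ, D]] and G := [[Σ⁺, −Σ⁺·B·D⁺],[−D⁺·Bᴴ·Σ⁺, D⁺ + D⁺·Bᴴ·Σ⁺·B·D⁺]]. Then G·R·G = G. -/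
open Matrix

/-- Condition II of Section VIII of the supplementary material: with
`G = [[Σ⁺, −Σ⁺·B·D⁺],[−D⁺·Bᴴ·Σ⁺, D⁺ + D⁺·Bᴴ·Σ⁺·B·D⁺]]` and
`R = [[A, B],[Bᴴ, D]]`, one has `G·R·G = G`. -/
theorem block_generalized_inverse_GRG {M L : ℕ}
    (A : Matrix (Fin M) (Fin M) ℂ) (D : Matrix (Fin L) (Fin L) ℂ)
    (B : Matrix (Fin M) (Fin L) ℂ)
    (hD : Dᴴ = D)
    (Dp : Matrix (Fin L) (Fin L) ℂ)
    (hDp1 : D * Dp * D = D) (hDp2 : Dp * D * Dp = Dp)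
    (hDp3 : (D * Dp)ᴴ = D * Dp) (hDp4 : (Dp * D)ᴴ = Dp * D)
    (hB : B * Dp * D = B)
    (Sp : Matrix (Fin M) (Fin M) ℂ)
    (hSp1 : (A - B * Dp * Bᴴ) * Sp * (A - B * Dp * Bᴴ) = A - B * Dp * Bᴴ)
    (hSp2 : Sp * (A - B * Dp * Bᴴ) * Sp = Sp)
    (hSp3 : ((A - B * Dp * Bᴴ) * Sp)ᴴ = (A - B * Dp * Bᴴ) * Sp)
    (hSp4 : (Sp * (A - B * Dp * Bᴴ))ᴴ = Sp * (A - B * Dp * Bᴴ)) :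
    fromBlocks Sp (-(Sp * B * Dp)) (-(Dp * Bᴴ * Sp)) (Dp + Dp * Bᴴ * Sp * B * Dp) *
      fromBlocks A B Bᴴ D *
        fromBlocks Sp (-(Sp * B * Dp)) (-(Dp * Bᴴ * Sp)) (Dp + Dp * Bᴴ * Sp * B * Dp) =
      fromBlocks Sp (-(Sp * B * Dp)) (-(Dp * Bᴴ * Sp)) (Dp + Dp * Bᴴ * Sp * B * Dp) := by
  obtain ⟨S, rfl, hS2⟩ : ∃ S, A = S + B * Dp * Bᴴ ∧ Sp * S * Sp = Sp :=
    ⟨A - B * Dp * Bᴴ, (sub_add_cancel _ _).symm, hSp2⟩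
  have e1 : ∀ (N : ℕ) (X : Matrix (Fin L) (Fin N) ℂ), B * (Dp * (D * X)) = B * X :=
    fun N X => by rw [← Matrix.mul_assoc, ← Matrix.mul_assoc, hB]
  have e1' : B * (Dp * D) = B := by rw [← Matrix.mul_assoc, hB]
  have e2 : ∀ (N : ℕ) (X : Matrix (Fin L) (Fin N) ℂ), Dp * (D * (Dp * X)) = Dp * X :=
    fun N X => by rw [← Matrix.mul_assoc, ← Matrix.mul_assoc, hDp2]
  have e2' : Dp * (D * Dp) = Dp := by rw [← Matrix.mul_assoc, hDp2]
  have e3 : ∀ (N : ℕ) (X : Matrix (Fin M) (Fin N) ℂ), Sp * (S * (Sp * X)) = Sp * X :=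
    fun N X => by rw [← Matrix.mul_assoc, ← Matrix.mul_assoc, hS2]
  have e3' : Sp * (S * Sp) = Sp := by rw [← Matrix.mul_assoc, hS2]
  simp only [fromBlocks_multiply]
  rw [fromBlocks_inj]
  refine ⟨?_, ?_, ?_, ?_⟩ <;>
    simp only [Matrix.mul_add, Matrix.add_mul, Matrix.sub_mul, Matrix.mul_sub,
      Matrix.neg_mul, Matrix.mul_neg, neg_neg, Matrix.mul_assoc, e1, e1', e2, e2', e3, e3'] <;>
    abel
end

section
/- Let R_ll be an L×L Hermitian complex matrix with Moore–Penrose pseudoinverse R_ll⁺, let R_mm be an M×M complex matrix, R_el an M×L complex matrix with R_le := R_elᴴ, and let W11 be an M×M complex matrix and P an L×M complex matrix. Define W21 := −R_ll⁺·R_le·W11 + R_ll⁺·P. Then W11ᴴ·R_mm·W11 + W11ᴴ·R_el·W21 + W21ᴴ·R_le·W11 + W21ᴴ·R_ll·W21 = W11ᴴ·(R_mm − R_el·R_ll⁺·R_le)·W11 + Pᴴ·R_ll⁺·P. -/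
open Matrix

/-- Identity (59) of Section IX of the supplementary material: with
`W21 = −R_ll⁺·R_le·W11 + R_ll⁺·P`, the post-NR_ext microphone correlation matrix satisfies
`W11ᴴ·R_mm·W11 + W11ᴴ·R_el·W21 + W21ᴴ·R_le·W11 + W21ᴴ·R_ll·W21
  = W11ᴴ·(R_mm − R_el·R_ll⁺·R_le)·W11 + Pᴴ·R_ll⁺·P`. -/
theorem post_NRext_mic_correlation {M L : ℕ}
    (Rll : Matrix (Fin L) (Fin L) ℂ)
    (hRll : Rllᴴ = Rll)
    (Rllp : Matrix (Fin L) (Fin L) ℂ)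
    (hp1 : Rll * Rllp * Rll = Rll) (hp2 : Rllp * Rll * Rllp = Rllp)
    (hp3 : (Rll * Rllp)ᴴ = Rll * Rllp) (hp4 : (Rllp * Rll)ᴴ = Rllp * Rll)
    (Rmm : Matrix (Fin M) (Fin M) ℂ)
    (Rel : Matrix (Fin M) (Fin L) ℂ)
    (W11 : Matrix (Fin M) (Fin M) ℂ)
    (P : Matrix (Fin L) (Fin M) ℂ) :
    let Rle : Matrix (Fin L) (Fin M) ℂ := Relᴴ
    let W21 : Matrix (Fin L) (Fin M) ℂ := -(Rllp * Rle * W11) + Rllp * P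
    W11ᴴ * Rmm * W11 + W11ᴴ * Rel * W21 + W21ᴴ * Rle * W11 + W21ᴴ * Rll * W21 =
      W11ᴴ * (Rmm - Rel * Rllp * Rle) * W11 + Pᴴ * Rllp * P := by
  intro Rle W21
  -- basic consequences
  have e1 : Rllpᴴ * Rll = Rll * Rllp := by
    rw [← hp3, conjTranspose_mul, hRll]
  have e2 : Rll * Rllpᴴ = Rllp * Rll := by
    rw [← hp4, conjTranspose_mul, hRll]
  have hKKA : Rllp = Rllp * Rllp * Rll := by
    have h1 : Rllp = Rllp * Rllpᴴ * Rll := by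
      conv_lhs => rw [← hp2]
      rw [mul_assoc, ← e1, ← mul_assoc]
    calc Rllp = Rllp * Rllpᴴ * Rll := h1
      _ = Rllp * Rllpᴴ * (Rll * Rllp * Rll) := by rw [hp1]
      _ = (Rllp * Rllpᴴ * Rll) * (Rllp * Rll) := by
            simp only [mul_assoc]
      _ = Rllp * (Rllp * Rll) := by rw [← h1]
      _ = Rllp * Rllp * Rll := by rw [mul_assoc]
  have hK : Rllpᴴ = Rllp := by
    have hA : Rllpᴴ = Rll * Rllpᴴ * Rllpᴴ := by
      conv_lhs => rw [hKKA]
      simp only [conjTranspose_mul, hRll, mul_assoc]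
    calc Rllpᴴ = Rll * Rllpᴴ * Rllpᴴ := hA
      _ = Rllp * Rll * Rllpᴴ := by rw [e2]
      _ = Rllp * (Rll * Rllpᴴ) := by rw [mul_assoc]
      _ = Rllp * (Rllp * Rll) := by rw [e2]
      _ = Rllp * Rllp * Rll := by rw [← mul_assoc]
      _ = Rllp := hKKA.symm
  -- rewrite W21
  have hW21 : W21 = Rllp * (P - Relᴴ * W11) := by
    show -(Rllp * Relᴴ * W11) + Rllp * P = _
    rw [Matrix.mul_sub, ← Matrix.mul_assoc]
    abel
  have hW21H : W21ᴴ = (Pᴴ - W11ᴴ * Rel) * Rllp := by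
    rw [hW21, conjTranspose_mul, hK, conjTranspose_sub, conjTranspose_mul,
      conjTranspose_conjTranspose]
  have hcol : (Pᴴ - W11ᴴ * Rel) * Rllp * Rll * (Rllp * (P - Relᴴ * W11)) =
      (Pᴴ - W11ᴴ * Rel) * Rllp * (P - Relᴴ * W11) := by
    have h : (Pᴴ - W11ᴴ * Rel) * Rllp * Rll * (Rllp * (P - Relᴴ * W11)) =
        (Pᴴ - W11ᴴ * Rel) * (Rllp * Rll * Rllp * (P - Relᴴ * W11)) := by
      simp only [Matrix.mul_assoc]
    rw [h, hp2, Matrix.mul_assoc]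
  show W11ᴴ * Rmm * W11 + W11ᴴ * Rel * W21 + W21ᴴ * Relᴴ * W11 + W21ᴴ * Rll * W21 =
      W11ᴴ * (Rmm - Rel * Rllp * Relᴴ) * W11 + Pᴴ * Rllp * P
  rw [hW21H, hW21, hcol]
  simp only [Matrix.mul_sub, Matrix.sub_mul, Matrix.mul_add, Matrix.add_mul,
    Matrix.mul_assoc]
  abel
end

section
/- Let A be an M×M complex matrix, D an L×L Hermitian complex matrix with Moore–Penrose pseudoinverse D⁺, and B an M×L complex matrix satisfying B·D⁺·D = B. Set Σ := A − B·D⁺·Bᴴ and let Σ⁺ be a Moore–Penrose pseudoinverse of Σ. Let S be an M×M complex matrix whose column space is contained in the column space of Σ (i.e., S = Σ·X for some matrix X). Then the (M+L)×(M+L) block matrix [[A, B],[Bᴴ, D]] multiplied by the (M+L)×M block column with top block Σ⁺·S and bottom block −D⁺·Bᴴ·Σ⁺·S equals the block column with top block S and bottom block 0. In particular, the AEC-NR filter w̃ = [[Σ⁺·S],[−D⁺·Bᴴ·Σ⁺·S]]·t is a solution of the extended Wiener–Hopf equations R̃·w̃ = [[S],[0]]·t for every vector t. -/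
open Matrix

/-- The AEC-NR expression (24) is a solution of the extended Wiener–Hopf equations:
`[[A, B],[Bᴴ, D]] · [[Σ⁺·S],[−D⁺·Bᴴ·Σ⁺·S]] = [[S],[0]]`, and hence
`w̃ = [[Σ⁺·S],[−D⁺·Bᴴ·Σ⁺·S]]·t` solves `R̃·w̃ = [[S],[0]]·t` for every vector `t`. -/
theorem AECNR_solves_extended_wiener_hopf {M L : ℕ}
    (A : Matrix (Fin M) (Fin M) ℂ) (D : Matrix (Fin L) (Fin L) ℂ)
    (B : Matrix (Fin M) (Fin L) ℂ)
    (hD : Dᴴ = D)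
    (Dp : Matrix (Fin L) (Fin L) ℂ)
    (hDp1 : D * Dp * D = D) (hDp2 : Dp * D * Dp = Dp)
    (hDp3 : (D * Dp)ᴴ = D * Dp) (hDp4 : (Dp * D)ᴴ = Dp * D)
    (hB : B * Dp * D = B)
    (Sp : Matrix (Fin M) (Fin M) ℂ)
    (hSp1 : (A - B * Dp * Bᴴ) * Sp * (A - B * Dp * Bᴴ) = A - B * Dp * Bᴴ)
    (hSp2 : Sp * (A - B * Dp * Bᴴ) * Sp = Sp)
    (hSp3 : ((A - B * Dp * Bᴴ) * Sp)ᴴ = (A - B * Dp * Bᴴ) * Sp)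
    (hSp4 : (Sp * (A - B * Dp * Bᴴ))ᴴ = Sp * (A - B * Dp * Bᴴ))
    (S : Matrix (Fin M) (Fin M) ℂ)
    (hS : ∃ X : Matrix (Fin M) (Fin M) ℂ, S = (A - B * Dp * Bᴴ) * X) :
    fromBlocks A B Bᴴ D * fromRows (Sp * S) (-(Dp * Bᴴ * Sp * S)) =
        fromRows S (0 : Matrix (Fin L) (Fin M) ℂ) ∧
      ∀ t : Fin M → ℂ,
        fromBlocks A B Bᴴ D *ᵥ (fromRows (Sp * S) (-(Dp * Bᴴ * Sp * S)) *ᵥ t) =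
          fromRows S (0 : Matrix (Fin L) (Fin M) ℂ) *ᵥ t := by
  obtain ⟨X, hX⟩ := hS
  have hDDDp : D * D * Dp = D := by
    have h1 := congrArg conjTranspose hDp1
    rw [conjTranspose_mul, hDp3, hD] at h1
    rwa [← Matrix.mul_assoc] at h1
  have hBDDp : B * D * Dp = B := by
    calc B * D * Dp = B * Dp * D * D * Dp := by rw [hB]
    _ = B * Dp * (D * D * Dp) := by simp only [Matrix.mul_assoc]
    _ = B * Dp * D := by rw [hDDDp]
    _ = B := hB
  have hDDpBH : D * (Dp * Bᴴ) = Bᴴ := by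
    have h2 := congrArg conjTranspose hBDDp
    rw [Matrix.mul_assoc, conjTranspose_mul, hDp3] at h2
    rwa [Matrix.mul_assoc] at h2
  have hSig : (A - B * Dp * Bᴴ) * (Sp * S) = S := by
    rw [hX, ← Matrix.mul_assoc, ← Matrix.mul_assoc, hSp1]
  have htop : A * (Sp * S) + B * -(Dp * Bᴴ * Sp * S) = S := by
    have h3 : A * (Sp * S) + B * -(Dp * Bᴴ * Sp * S)
        = (A - B * Dp * Bᴴ) * (Sp * S) := by
      simp only [Matrix.mul_neg, Matrix.sub_mul, Matrix.mul_assoc]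
      abel
    rw [h3, hSig]
  have hbot : Bᴴ * (Sp * S) + D * -(Dp * Bᴴ * Sp * S) = 0 := by
    have h4 : D * (Dp * Bᴴ * Sp * S) = Bᴴ * (Sp * S) := by
      calc D * (Dp * Bᴴ * Sp * S) = (D * (Dp * Bᴴ)) * (Sp * S) := by
            simp only [Matrix.mul_assoc]
      _ = Bᴴ * (Sp * S) := by rw [hDDpBH]
    rw [Matrix.mul_neg, h4]
    abel
  have hmain : fromBlocks A B Bᴴ D * fromRows (Sp * S) (-(Dp * Bᴴ * Sp * S)) =
      fromRows S (0 : Matrix (Fin L) (Fin M) ℂ) := by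
    rw [fromBlocks_mul_fromRows, htop, hbot]
  refine ⟨hmain, fun t => ?_⟩
  rw [mulVec_mulVec, hmain]
end

section
/- Let R_ss and R_nn be n×n Hermitian positive-semidefinite complex matrices, set R_mm := R_ss + R_nn, and let G be any generalized inverse of R_mm, i.e., R_mm·G·R_mm = R_mm. Then R_mm·G·R_ss = R_ss. Consequently, for every vector t, the vector w = G·R_ss·t solves the Wiener–Hopf equations R_mm·w = R_ss·t. -/
open Matrix
open scoped ComplexOrder

/-- The MWF `w = G·R_ss·t` solves the Wiener–Hopf equations: for Hermitian PSD `R_ss`, `R_nn`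
with `R_mm = R_ss + R_nn` and any generalized inverse `G` of `R_mm`,
`R_mm·G·R_ss = R_ss`, hence `R_mm·(G·R_ss·t) = R_ss·t` for every `t`. -/
theorem MWF_solves_wiener_hopf {n : ℕ}
    (Rss Rnn : Matrix (Fin n) (Fin n) ℂ)
    (hss : Rss.PosSemidef) (hnn : Rnn.PosSemidef)
    (G : Matrix (Fin n) (Fin n) ℂ)
    (hG : (Rss + Rnn) * G * (Rss + Rnn) = Rss + Rnn) :
    (Rss + Rnn) * G * Rss = Rss ∧
      ∀ t : Fin n → ℂ, (Rss + Rnn) *ᵥ ((G * Rss) *ᵥ t) = Rss *ᵥ t := by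
  set Rmm := Rss + Rnn with hRmm
  have hmm : Rmm.PosSemidef := hss.add hnn
  -- kernel inclusion: Rmm v = 0 → Rss v = 0
  have key : ∀ v : Fin n → ℂ, Rmm *ᵥ v = 0 → Rss *ᵥ v = 0 := by
    intro v hv
    have h0 : star v ⬝ᵥ Rmm *ᵥ v = 0 := by rw [hv, dotProduct_zero]
    have hsplit : star v ⬝ᵥ Rss *ᵥ v + star v ⬝ᵥ Rnn *ᵥ v = 0 := by
      rw [← dotProduct_add, ← add_mulVec]; exact h0
    have h1 := hss.dotProduct_mulVec_nonneg v
    have h2 := hnn.dotProduct_mulVec_nonneg v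
    have hz : star v ⬝ᵥ Rss *ᵥ v = 0 :=
      ((add_eq_zero_iff_of_nonneg h1 h2).mp hsplit).1
    exact (hss.dotProduct_mulVec_zero_iff v).mp hz
  -- conjugate transpose of hG
  have hG' : Rmm * Gᴴ * Rmm = Rmm := by
    have := congrArg conjTranspose hG
    simpa [conjTranspose_mul, hmm.isHermitian.eq, Matrix.mul_assoc] using this
  have hmul0 : Rmm * (Gᴴ * Rmm - 1) = 0 := by
    rw [Matrix.mul_sub, Matrix.mul_one, ← Matrix.mul_assoc, hG', sub_self]
  have hcol : Rss * (Gᴴ * Rmm - 1) = 0 := by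
    ext i j
    have hv : Rmm *ᵥ ((Gᴴ * Rmm - 1) *ᵥ Pi.single j 1) = 0 := by
      rw [mulVec_mulVec, hmul0, zero_mulVec]
    have := congrFun (key _ hv) i
    rwa [mulVec_mulVec, mulVec_single_one] at this
  have hmain : Rmm * G * Rss = Rss := by
    have := congrArg conjTranspose hcol
    simp only [conjTranspose_mul, conjTranspose_sub, conjTranspose_one,
      conjTranspose_conjTranspose, hmm.isHermitian.eq, hss.isHermitian.eq,
      conjTranspose_zero] at this
    have h2 : (Rmm * G - 1) * Rss = 0 := this
    rw [Matrix.sub_mul, Matrix.one_mul, sub_eq_zero] at h2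
    rw [Matrix.mul_assoc] at h2 ⊢
    exact h2
  refine ⟨hmain, fun t => ?_⟩
  rw [mulVec_mulVec, ← Matrix.mul_assoc, hmain]
end

section
/- Let R_ll be an L×L Hermitian complex matrix with Moore–Penrose pseudoinverse R_ll⁺, R_le an L×M complex matrix with R_el := R_leᴴ, R_lsls an L×L Hermitian complex matrix, R_lses an L×M complex matrix with R_esls := R_lsesᴴ, and A0 an M×M complex matrix. Assume R_lsls·R_ll⁺·R_le = R_lses. Let Σ⁺ be any M×M complex matrix, and define G := [[Σ⁺, −Σ⁺·R_el·R_ll⁺],[−R_ll⁺·R_le·Σ⁺, R_ll⁺ + R_ll⁺·R_le·Σ⁺·R_el·R_ll⁺]]. Then G·[[A0, R_esls],[R_lses, R_lsls]] = [[W11, 0],[W21, R_ll⁺·R_lsls]], where W11 := Σ⁺·(A0 − R_el·R_ll⁺·R_lses) and W21 := −R_ll⁺·R_le·W11 + R_ll⁺·R_lses. -/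
open Matrix

/-- Block structure (56)–(57) of the extended NR filter of Section IX:
`G·[[A0, R_esls],[R_lses, R_lsls]] = [[W11, 0],[W21, R_ll⁺·R_lsls]]`. -/
theorem NRext_block_structure {M L : ℕ}
    (Rll : Matrix (Fin L) (Fin L) ℂ)
    (hRll : Rllᴴ = Rll)
    (Rllp : Matrix (Fin L) (Fin L) ℂ)
    (hp1 : Rll * Rllp * Rll = Rll) (hp2 : Rllp * Rll * Rllp = Rllp)
    (hp3 : (Rll * Rllp)ᴴ = Rll * Rllp) (hp4 : (Rllp * Rll)ᴴ = Rllp * Rll)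
    (Rle : Matrix (Fin L) (Fin M) ℂ)
    (Rlsls : Matrix (Fin L) (Fin L) ℂ) (hRlsls : Rlslsᴴ = Rlsls)
    (Rlses : Matrix (Fin L) (Fin M) ℂ)
    (A0 : Matrix (Fin M) (Fin M) ℂ)
    (hassump : Rlsls * Rllp * Rle = Rlses)
    (Sp : Matrix (Fin M) (Fin M) ℂ) :
    let Rel : Matrix (Fin M) (Fin L) ℂ := Rleᴴ
    let Resls : Matrix (Fin M) (Fin L) ℂ := Rlsesᴴ
    let W11 : Matrix (Fin M) (Fin M) ℂ := Sp * (A0 - Rel * Rllp * Rlses)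
    let W21 : Matrix (Fin L) (Fin M) ℂ := -(Rllp * Rle * W11) + Rllp * Rlses
    fromBlocks Sp (-(Sp * Rel * Rllp)) (-(Rllp * Rle * Sp)) (Rllp + Rllp * Rle * Sp * Rel * Rllp) *
        fromBlocks A0 Resls Rlses Rlsls =
      fromBlocks W11 (0 : Matrix (Fin M) (Fin L) ℂ) W21 (Rllp * Rlsls) := by
  intro Rel Resls W11 W21
  set A := Rll
  set X := Rllp with hX
  -- the conjugate transpose of X is also a Moore–Penrose pseudoinverse of A
  have hY1 : A * Xᴴ * A = A := by
    calc A * Xᴴ * A = (Aᴴ * X * Aᴴ)ᴴ := by simp [conjTranspose_mul, mul_assoc]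
      _ = A := by rw [hRll, hp1, hRll]
  have hY3 : A * Xᴴ = X * A := by
    calc A * Xᴴ = (X * Aᴴ)ᴴ := by simp [conjTranspose_mul]
      _ = (X * A)ᴴ := by rw [hRll]
      _ = X * A := hp4
  have hY4 : Xᴴ * A = A * X := by
    calc Xᴴ * A = (Aᴴ * X)ᴴ := by simp [conjTranspose_mul]
      _ = (A * X)ᴴ := by rw [hRll]
      _ = A * X := hp3
  -- hence X is Hermitian (uniqueness argument)
  have hph : Xᴴ = X := by
    have h1 : A * X = A * Xᴴ := by
      calc A * X = (A * Xᴴ * A) * X := by rw [hY1]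
        _ = (A * Xᴴ) * (A * X) := by noncomm_ring
        _ = (X * A) * (Xᴴ * A) := by rw [hY3, hY4]
        _ = X * (A * Xᴴ * A) := by noncomm_ring
        _ = X * A := by rw [hY1]
        _ = A * Xᴴ := hY3.symm
    have h2 : X * A = Xᴴ * A := by
      calc X * A = X * (A * Xᴴ * A) := by rw [hY1]
        _ = (X * A) * (Xᴴ * A) := by noncomm_ring
        _ = (A * Xᴴ) * (A * X) := by rw [hY3, hY4]
        _ = (A * Xᴴ * A) * X := by noncomm_ring
        _ = A * X := by rw [hY1]
        _ = Xᴴ * A := hY4.symm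
    calc Xᴴ = Xᴴ * A * Xᴴ := by
          have := congrArg conjTranspose hp2
          simpa [conjTranspose_mul, hRll, Matrix.mul_assoc] using this.symm
      _ = Xᴴ * (A * X) := by rw [mul_assoc, ← h1]
      _ = (Xᴴ * A) * X := by rw [mul_assoc]
      _ = (X * A) * X := by rw [← h2]
      _ = X := hp2
  -- key identity
  have key : Rel * Rllp * Rlsls = Resls := by
    show Rleᴴ * X * Rlsls = Rlsesᴴ
    calc Rleᴴ * X * Rlsls = Rleᴴ * Xᴴ * Rlslsᴴ := by rw [hph, hRlsls]
      _ = (Rlsls * X * Rle)ᴴ := by simp [conjTranspose_mul, Matrix.mul_assoc]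
      _ = Rlsesᴴ := by rw [hassump]
  rw [fromBlocks_multiply]
  have e11 : Sp * A0 + -(Sp * Rel * Rllp) * Rlses = W11 := by
    show _ = Sp * (A0 - Rel * Rllp * Rlses)
    simp [Matrix.mul_sub, Matrix.mul_assoc, sub_eq_add_neg, Matrix.mul_add, Matrix.mul_neg, Matrix.neg_mul]
  have e12 : Sp * Resls + -(Sp * Rel * Rllp) * Rlsls = 0 := by
    rw [← key]; simp [Matrix.mul_assoc, Matrix.neg_mul]
  have e21 : -(Rllp * Rle * Sp) * A0 +
      (Rllp + Rllp * Rle * Sp * Rel * Rllp) * Rlses = W21 := by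
    show _ = -(Rllp * Rle * (Sp * (A0 - Rel * Rllp * Rlses))) + Rllp * Rlses
    simp only [Matrix.mul_sub, sub_eq_add_neg, Matrix.mul_add, Matrix.mul_neg, Matrix.neg_mul,
      Matrix.add_mul, Matrix.mul_assoc, neg_add, neg_neg]
    abel
  have e22 : -(Rllp * Rle * Sp) * Resls +
      (Rllp + Rllp * Rle * Sp * Rel * Rllp) * Rlsls = Rllp * Rlsls := by
    rw [← key]
    simp only [Matrix.mul_assoc, Matrix.add_mul, Matrix.neg_mul, mul_neg]
    abel
  rw [e11, e12, e21, e22]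
end

section
/- Let L and S be n×n Hermitian positive-semidefinite complex matrices such that the column space of S is contained in the column space of L (i.e., S = L·Y for some matrix Y), and let P be an n×m complex matrix whose column space is contained in the column space of S (i.e., P = S·X for some matrix X). Let L⁺ be a Moore–Penrose pseudoinverse of L and (S·L⁺·S)⁺ a Moore–Penrose pseudoinverse of S·L⁺·S. Then (S·L⁺·P)ᴴ · (S·L⁺·S)⁺ · (S·L⁺·P) = Pᴴ·L⁺·P. -/
open Matrix
open scoped ComplexOrder

/-- Equation (63) of Section IX of the supplementary material:
`(S·L⁺·P)ᴴ · (S·L⁺·S)⁺ · (S·L⁺·P) = Pᴴ·L⁺·P`. -/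
theorem post_NRext_RxlRllRlx {n m : ℕ}
    (L S : Matrix (Fin n) (Fin n) ℂ) (P : Matrix (Fin n) (Fin m) ℂ)
    (hL : L.PosSemidef) (hS : S.PosSemidef)
    (hSL : ∃ Y : Matrix (Fin n) (Fin n) ℂ, S = L * Y)
    (hPS : ∃ X : Matrix (Fin n) (Fin m) ℂ, P = S * X)
    (Lp : Matrix (Fin n) (Fin n) ℂ)
    (hLp1 : L * Lp * L = L) (hLp2 : Lp * L * Lp = Lp)
    (hLp3 : (L * Lp)ᴴ = L * Lp) (hLp4 : (Lp * L)ᴴ = Lp * L)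
    (G : Matrix (Fin n) (Fin n) ℂ)
    (hG1 : (S * Lp * S) * G * (S * Lp * S) = S * Lp * S)
    (hG2 : G * (S * Lp * S) * G = G)
    (hG3 : ((S * Lp * S) * G)ᴴ = (S * Lp * S) * G)
    (hG4 : (G * (S * Lp * S))ᴴ = G * (S * Lp * S)) :
    (S * Lp * P)ᴴ * G * (S * Lp * P) = Pᴴ * Lp * P := by
  obtain ⟨Y, hY⟩ := hSL
  obtain ⟨X, hX⟩ := hPS
  have hSH : Sᴴ = S := hS.1
  have hLH : Lᴴ = L := hL.1
  have hS' : S = Yᴴ * L := by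
    conv_lhs => rw [← hSH, hY]
    rw [conjTranspose_mul, hLH]
  have hM : S * Lp * S = Yᴴ * L * Y := by
    nth_rewrite 1 [hS']
    nth_rewrite 1 [hY]
    calc Yᴴ * L * Lp * (L * Y) = Yᴴ * (L * Lp * L) * Y := by
          simp only [Matrix.mul_assoc]
    _ = Yᴴ * L * Y := by rw [hLp1, Matrix.mul_assoc]
  have hMH : (S * Lp * S)ᴴ = S * Lp * S := by
    rw [hM]
    simp only [conjTranspose_mul, conjTranspose_conjTranspose, hLH, Matrix.mul_assoc]
  have hP : S * Lp * P = (S * Lp * S) * X := by rw [hX]; simp only [Matrix.mul_assoc]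
  rw [hP, hX, conjTranspose_mul, hMH, conjTranspose_mul, hSH]
  calc Xᴴ * (S * Lp * S) * G * (S * Lp * S * X)
      = Xᴴ * ((S * Lp * S) * G * (S * Lp * S)) * X := by simp only [Matrix.mul_assoc]
    _ = Xᴴ * (S * Lp * S) * X := by rw [hG1]
    _ = Xᴴ * S * Lp * (S * X) := by simp only [Matrix.mul_assoc]
end

section
/- Let L and S be n×n Hermitian positive-semidefinite complex matrices such that the column space of S is contained in the column space of L (i.e., S = L·Y for some matrix Y), and let P be an n×m complex matrix whose column space is contained in the column space of S (i.e., P = S·X for some matrix X). Let L⁺, S⁺ and (S·L⁺·S)⁺ be Moore–Penrose pseudoinverses of L, S and S·L⁺·S respectively. Then (S·L⁺·S)⁺ · (S·L⁺·P) = S⁺·P. -/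
open Matrix
open scoped ComplexOrder

/-- Uniqueness of the Moore–Penrose pseudoinverse. -/
lemma mp_unique {n : ℕ} (X A B : Matrix (Fin n) (Fin n) ℂ)
    (hA1 : X * A * X = X) (hA2 : A * X * A = A)
    (hA3 : (X * A)ᴴ = X * A) (hA4 : (A * X)ᴴ = A * X)
    (hB1 : X * B * X = X) (hB2 : B * X * B = B)
    (hB3 : (X * B)ᴴ = X * B) (hB4 : (B * X)ᴴ = B * X) : A = B := by
  have hAXBX : A * X = B * X := by
    calc A * X = A * (X * B * X) := by rw [hB1]
      _ = (A * X) * (B * X) := by noncomm_ring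
      _ = (A * X)ᴴ * (B * X)ᴴ := by rw [hA4, hB4]
      _ = ((B * X) * (A * X))ᴴ := (conjTranspose_mul _ _).symm
      _ = (B * (X * A * X))ᴴ := by noncomm_ring
      _ = (B * X)ᴴ := by rw [hA1]
      _ = B * X := hB4
  have hXAXB : X * A = X * B := by
    calc X * A = (X * B * X) * A := by rw [hB1]
      _ = (X * B) * (X * A) := by noncomm_ring
      _ = (X * B)ᴴ * (X * A)ᴴ := by rw [hA3, hB3]
      _ = ((X * A) * (X * B))ᴴ := (conjTranspose_mul _ _).symm
      _ = ((X * A * X) * B)ᴴ := by noncomm_ring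
      _ = (X * B)ᴴ := by rw [hA1]
      _ = X * B := hB3
  calc A = A * X * A := hA2.symm
    _ = B * X * A := by rw [hAXBX]
    _ = B * (X * A) := by rw [mul_assoc]
    _ = B * (X * B) := by rw [hXAXB]
    _ = B * X * B := by rw [mul_assoc]
    _ = B := hB2

/-- A Moore–Penrose pseudoinverse of a Hermitian matrix is Hermitian. -/
lemma mp_herm {n : ℕ} (X A : Matrix (Fin n) (Fin n) ℂ) (hX : Xᴴ = X)
    (hA1 : X * A * X = X) (hA2 : A * X * A = A)
    (hA3 : (X * A)ᴴ = X * A) (hA4 : (A * X)ᴴ = A * X) : Aᴴ = A := by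
  refine mp_unique X Aᴴ A ?_ ?_ ?_ ?_ hA1 hA2 hA3 hA4
  · calc X * Aᴴ * X = Xᴴ * Aᴴ * Xᴴ := by rw [hX]
      _ = (X * (A * X))ᴴ := by rw [conjTranspose_mul, conjTranspose_mul]
      _ = ((X * A) * X)ᴴ := by rw [mul_assoc]
      _ = Xᴴ := by rw [hA1]
      _ = X := hX
  · calc Aᴴ * X * Aᴴ = Aᴴ * Xᴴ * Aᴴ := by rw [hX]
      _ = (A * (X * A))ᴴ := by rw [conjTranspose_mul, conjTranspose_mul]
      _ = ((A * X) * A)ᴴ := by rw [mul_assoc]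
      _ = Aᴴ := by rw [hA2]
  · calc (X * Aᴴ)ᴴ = A * Xᴴ := by rw [conjTranspose_mul, conjTranspose_conjTranspose]
      _ = A * X := by rw [hX]
      _ = (A * X)ᴴ := hA4.symm
      _ = Xᴴ * Aᴴ := by rw [conjTranspose_mul]
      _ = X * Aᴴ := by rw [hX]
  · calc (Aᴴ * X)ᴴ = Xᴴ * A := by rw [conjTranspose_mul, conjTranspose_conjTranspose]
      _ = X * A := by rw [hX]
      _ = (X * A)ᴴ := hA3.symm
      _ = Aᴴ * Xᴴ := by rw [conjTranspose_mul]
      _ = Aᴴ * X := by rw [hX]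

/-- If `Cᴴ C K = 0` then `C K = 0`. -/
lemma cancel_left_s16 {k p q : ℕ} (C : Matrix (Fin p) (Fin k) ℂ) (K : Matrix (Fin k) (Fin q) ℂ)
    (h : Cᴴ * C * K = 0) : C * K = 0 := by
  have h1 : (C * K)ᴴ * (C * K) = 0 := by
    rw [conjTranspose_mul]
    calc Kᴴ * Cᴴ * (C * K) = Kᴴ * (Cᴴ * C * K) := by simp only [Matrix.mul_assoc]
      _ = 0 := by rw [h, Matrix.mul_zero]
  exact conjTranspose_mul_self_eq_zero.mp h1

/-- Equations (69)–(70)/(30): the AEC filter computed after the extended NR is independent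
of the NR_ext: `(S·L⁺·S)⁺ · (S·L⁺·P) = S⁺·P`. -/
theorem AEC_after_NRext_independent {n m : ℕ}
    (L S : Matrix (Fin n) (Fin n) ℂ) (P : Matrix (Fin n) (Fin m) ℂ)
    (hL : L.PosSemidef) (hS : S.PosSemidef)
    (hSL : ∃ Y : Matrix (Fin n) (Fin n) ℂ, S = L * Y)
    (hPS : ∃ X : Matrix (Fin n) (Fin m) ℂ, P = S * X)
    (Lp : Matrix (Fin n) (Fin n) ℂ)
    (hLp1 : L * Lp * L = L) (hLp2 : Lp * L * Lp = Lp)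
    (hLp3 : (L * Lp)ᴴ = L * Lp) (hLp4 : (Lp * L)ᴴ = Lp * L)
    (Sp : Matrix (Fin n) (Fin n) ℂ)
    (hSp1 : S * Sp * S = S) (hSp2 : Sp * S * Sp = Sp)
    (hSp3 : (S * Sp)ᴴ = S * Sp) (hSp4 : (Sp * S)ᴴ = Sp * S)
    (G : Matrix (Fin n) (Fin n) ℂ)
    (hG1 : (S * Lp * S) * G * (S * Lp * S) = S * Lp * S)
    (hG2 : G * (S * Lp * S) * G = G)
    (hG3 : ((S * Lp * S) * G)ᴴ = (S * Lp * S) * G)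
    (hG4 : (G * (S * Lp * S))ᴴ = G * (S * Lp * S)) :
    G * (S * Lp * P) = Sp * P := by
  obtain ⟨Y, hY⟩ := hSL
  obtain ⟨X, hX⟩ := hPS
  have hLh : Lᴴ = L := hL.isHermitian
  have hSh : Sᴴ = S := hS.isHermitian
  have hLpH : Lpᴴ = Lp := mp_herm L Lp hLh hLp1 hLp2 hLp3 hLp4
  have hSpH : Spᴴ = Sp := mp_herm S Sp hSh hSp1 hSp2 hSp3 hSp4
  -- key column-space identities
  have key1 : L * Lp * S = S := by
    calc L * Lp * S = L * Lp * (L * Y) := by rw [hY]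
      _ = (L * Lp * L) * Y := by noncomm_ring
      _ = L * Y := by rw [hLp1]
      _ = S := hY.symm
  -- factor Lp = Dᴴ D
  obtain ⟨D, hLpfac⟩ : ∃ D : Matrix (Fin n) (Fin n) ℂ, Lp = Dᴴ * D := by
    open scoped MatrixOrder Matrix.Norms.L2Operator in
    obtain ⟨B, hB⟩ : ∃ B : Matrix (Fin n) (Fin n) ℂ, L = Bᴴ * B :=
      CStarAlgebra.nonneg_iff_eq_star_mul_self.mp hL.nonneg
    refine ⟨B * Lp, ?_⟩
    calc Lp = Lp * L * Lp := hLp2.symm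
      _ = Lpᴴ * (Bᴴ * B) * Lp := by rw [hLpH, hB]
      _ = (B * Lp)ᴴ * (B * Lp) := by rw [conjTranspose_mul]; noncomm_ring
  obtain ⟨M, hM⟩ : ∃ M : Matrix (Fin n) (Fin n) ℂ, M = S * Lp * S := ⟨_, rfl⟩
  rw [← hM] at hG1 hG2 hG3 hG4
  have hMfac : M = (D * S)ᴴ * (D * S) := by
    calc M = S * (Dᴴ * D) * S := by rw [hM, hLpfac]
      _ = Sᴴ * Dᴴ * (D * S) := by rw [hSh]; noncomm_ring
      _ = (D * S)ᴴ * (D * S) := by rw [conjTranspose_mul]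
  have hMh : Mᴴ = M := by
    rw [hMfac, conjTranspose_mul, conjTranspose_conjTranspose]
  have hGH : Gᴴ = G := mp_herm M G hMh hG1 hG2 hG3 hG4
  have hcomm : G * M = M * G := by
    calc G * M = Gᴴ * Mᴴ := by rw [hGH, hMh]
      _ = (M * G)ᴴ := (conjTranspose_mul M G).symm
      _ = M * G := hG3
  have hMK : M * (1 - G * M) = 0 := by
    rw [mul_sub, mul_one, ← mul_assoc, hG1, sub_self]
  have hCK : (D * S) * (1 - G * M) = 0 := by
    have hMK' := hMK
    nth_rewrite 1 [hMfac] at hMK'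
    exact cancel_left_s16 (D * S) (1 - G * M) hMK'
  have hLpSK : Lp * S * (1 - G * M) = 0 := by
    calc Lp * S * (1 - G * M) = Dᴴ * ((D * S) * (1 - G * M)) := by
          rw [hLpfac]; noncomm_ring
      _ = 0 := by rw [hCK, mul_zero]
  have hSK : S * (1 - G * M) = 0 := by
    have h2 : L * (Lp * S * (1 - G * M)) = 0 := by rw [hLpSK, mul_zero]
    rwa [← mul_assoc, ← mul_assoc, key1] at h2
  have hSGM : S * (G * M) = S := by
    rw [mul_sub, mul_one, sub_eq_zero] at hSK
    exact hSK.symm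
  have hGMS : G * M * S = S := by
    have h := congrArg conjTranspose hSGM
    rwa [conjTranspose_mul, hG4, hSh] at h
  have hSpS : Sp * S = S * Sp := by
    calc Sp * S = (Sp * S)ᴴ := hSp4.symm
      _ = Sᴴ * Spᴴ := conjTranspose_mul Sp S
      _ = S * Sp := by rw [hSh, hSpH]
  have hGMSpS : G * M * (Sp * S) = Sp * S := by
    calc G * M * (Sp * S) = G * M * S * Sp := by rw [hSpS]; simp only [mul_assoc]
      _ = S * Sp := by rw [hGMS]
      _ = Sp * S := hSpS.symm
  have hSpSGM : Sp * S * (G * M) = Sp * S := by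
    calc Sp * S * (G * M) = (Sp * S)ᴴ * (G * M)ᴴ := by
          rw [hSp4, conjTranspose_mul, hGH, hMh, ← hcomm]
      _ = ((G * M) * (Sp * S))ᴴ := (conjTranspose_mul _ _).symm
      _ = (G * M * (Sp * S))ᴴ := by rw [mul_assoc]
      _ = (Sp * S)ᴴ := by rw [hGMSpS]
      _ = Sp * S := hSp4
  have hSpSM : Sp * S * M = M := by
    calc Sp * S * M = S * Sp * (S * Lp * S) := by rw [← hSpS, hM]
      _ = (S * Sp * S) * (Lp * S) := by simp only [mul_assoc]
      _ = S * (Lp * S) := by rw [hSp1]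
      _ = M := by rw [hM, mul_assoc]
  have hSpSGM2 : Sp * S * (G * M) = G * M := by
    calc Sp * S * (G * M) = Sp * S * (M * G) := by rw [hcomm]
      _ = (Sp * S * M) * G := by rw [← mul_assoc]
      _ = M * G := by rw [hSpSM]
      _ = G * M := hcomm.symm
  have hfinal : G * M = Sp * S := by rw [← hSpSGM2, hSpSGM]
  calc G * (S * Lp * P) = G * (S * Lp * (S * X)) := by rw [hX]
    _ = (G * M) * X := by rw [hM]; simp only [Matrix.mul_assoc]
    _ = (Sp * S) * X := by rw [hfinal]
    _ = Sp * P := by rw [hX, Matrix.mul_assoc]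
end

section
/- Let R_ss and R_nn be n×n Hermitian positive-semidefinite complex matrices, let (R_ss + R_nn)⁺ and R_ss⁺ be Moore–Penrose pseudoinverses, set M := R_ss·(R_ss + R_nn)⁺·R_ss, and let M⁺ be a Moore–Penrose pseudoinverse of M. Then M⁺·(R_ss·(R_ss + R_nn)⁺·R_ss) = R_ss⁺·R_ss. -/
open Matrix
open scoped ComplexOrder
open scoped MatrixOrder

/-- Uniqueness of the Moore–Penrose pseudoinverse. -/
private lemma pinv_unique' {n : ℕ} {A X Y : Matrix (Fin n) (Fin n) ℂ}
    (hX1 : A * X * A = A) (hX2 : X * A * X = X)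
    (hX3 : (A * X)ᴴ = A * X) (hX4 : (X * A)ᴴ = X * A)
    (hY1 : A * Y * A = A) (hY2 : Y * A * Y = Y)
    (hY3 : (A * Y)ᴴ = A * Y) (hY4 : (Y * A)ᴴ = Y * A) : X = Y := by
  have h1 : A * X = A * Y := by
    calc A * X = (A * X)ᴴ := hX3.symm
      _ = ((A * Y) * (A * X))ᴴ := by
          rw [show (A * Y) * (A * X) = (A * Y * A) * X by simp only [mul_assoc], hY1]
      _ = (A * X)ᴴ * (A * Y)ᴴ := by rw [conjTranspose_mul]
      _ = (A * X) * (A * Y) := by rw [hX3, hY3]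
      _ = (A * X * A) * Y := by simp only [mul_assoc]
      _ = A * Y := by rw [hX1]
  have h2 : X * A = Y * A := by
    calc X * A = (X * A)ᴴ := hX4.symm
      _ = ((X * A) * (Y * A))ᴴ := by
          rw [show (X * A) * (Y * A) = X * (A * Y * A) by simp only [mul_assoc], hY1]
      _ = (Y * A)ᴴ * (X * A)ᴴ := by rw [conjTranspose_mul]
      _ = (Y * A) * (X * A) := by rw [hX4, hY4]
      _ = Y * (A * X * A) := by simp only [mul_assoc]
      _ = Y * A := by rw [hX1]
  calc X = X * A * X := hX2.symm
    _ = Y * A * X := by rw [h2]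
    _ = Y * (A * X) := by rw [mul_assoc]
    _ = Y * (A * Y) := by rw [h1]
    _ = Y * A * Y := by rw [mul_assoc]
    _ = Y := hY2

/-- If the sum of two PSD matrices is zero, the first is zero. -/
private lemma psd_add_eq_zero_left' {n : ℕ} {A B : Matrix (Fin n) (Fin n) ℂ}
    (hA : A.PosSemidef) (hB : B.PosSemidef) (h : A + B = 0) : A = 0 := by
  have hv : ∀ x, A *ᵥ x = 0 := by
    intro x
    rw [← hA.dotProduct_mulVec_zero_iff]
    have h1 := hA.dotProduct_mulVec_nonneg x
    have h2 := hB.dotProduct_mulVec_nonneg x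
    have hsum : star x ⬝ᵥ A *ᵥ x + star x ⬝ᵥ B *ᵥ x = 0 := by
      rw [← dotProduct_add, ← add_mulVec, h, zero_mulVec, dotProduct_zero]
    have hle : star x ⬝ᵥ A *ᵥ x ≤ 0 := by
      calc star x ⬝ᵥ A *ᵥ x ≤ star x ⬝ᵥ A *ᵥ x + star x ⬝ᵥ B *ᵥ x :=
            le_add_of_nonneg_right h2
        _ = 0 := hsum
    exact le_antisymm hle h1
  ext i j
  have := congrFun (hv (Pi.single j 1)) i
  simpa using this

/-- Post-filter reduction of Section X: for Hermitian PSD `R_ss`, `R_nn`, with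
`M = R_ss·(R_ss + R_nn)⁺·R_ss`, one has `M⁺·(R_ss·(R_ss + R_nn)⁺·R_ss) = R_ss⁺·R_ss`. -/
theorem postfilter_reduces_to_projection {n : ℕ}
    (Rss Rnn : Matrix (Fin n) (Fin n) ℂ)
    (hss : Rss.PosSemidef) (hnn : Rnn.PosSemidef)
    (Np : Matrix (Fin n) (Fin n) ℂ)
    (hNp1 : (Rss + Rnn) * Np * (Rss + Rnn) = Rss + Rnn)
    (hNp2 : Np * (Rss + Rnn) * Np = Np)
    (hNp3 : ((Rss + Rnn) * Np)ᴴ = (Rss + Rnn) * Np)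
    (hNp4 : (Np * (Rss + Rnn))ᴴ = Np * (Rss + Rnn))
    (Sp : Matrix (Fin n) (Fin n) ℂ)
    (hSp1 : Rss * Sp * Rss = Rss) (hSp2 : Sp * Rss * Sp = Sp)
    (hSp3 : (Rss * Sp)ᴴ = Rss * Sp) (hSp4 : (Sp * Rss)ᴴ = Sp * Rss)
    (Mp : Matrix (Fin n) (Fin n) ℂ)
    (hMp1 : (Rss * Np * Rss) * Mp * (Rss * Np * Rss) = Rss * Np * Rss)
    (hMp2 : Mp * (Rss * Np * Rss) * Mp = Mp)
    (hMp3 : ((Rss * Np * Rss) * Mp)ᴴ = (Rss * Np * Rss) * Mp)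
    (hMp4 : (Mp * (Rss * Np * Rss))ᴴ = Mp * (Rss * Np * Rss)) :
    Mp * (Rss * Np * Rss) = Sp * Rss := by
  set T := Rss + Rnn with hTdef
  have hRssH : Rssᴴ = Rss := hss.1
  have hTH : Tᴴ = T := by rw [hTdef, conjTranspose_add, hss.1, hnn.1]
  have hTpsd : T.PosSemidef := hss.add hnn
  -- Np is Hermitian
  have hNpH : Npᴴ = Np := by
    have e1 : T * Npᴴ = Np * T := by
      calc T * Npᴴ = (Np * T)ᴴ := by rw [conjTranspose_mul, hTH]
        _ = Np * T := hNp4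
    have e2 : Npᴴ * T = T * Np := by
      calc Npᴴ * T = (T * Np)ᴴ := by rw [conjTranspose_mul, hTH]
        _ = T * Np := hNp3
    have c1 : T * Npᴴ * T = T := by
      have := congrArg conjTranspose hNp1
      simpa [conjTranspose_mul, hTH, mul_assoc] using this
    have c2 : Npᴴ * T * Npᴴ = Npᴴ := by
      have := congrArg conjTranspose hNp2
      simpa [conjTranspose_mul, hTH, mul_assoc] using this
    have c3 : (T * Npᴴ)ᴴ = T * Npᴴ := by rw [e1, hNp4]
    have c4 : (Npᴴ * T)ᴴ = Npᴴ * T := by rw [e2, hNp3]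
    exact pinv_unique' c1 c2 c3 c4 hNp1 hNp2 hNp3 hNp4
  -- Np is PSD
  have hNppsd : Np.PosSemidef := by
    have e : Np = Np * T * Npᴴ := by rw [hNpH]; exact hNp2.symm
    rw [e]
    exact hTpsd.mul_mul_conjTranspose_same Np
  -- (1 - T Np) kills T
  have hKT : (1 - T * Np) * T = 0 := by
    rw [sub_mul, one_mul, hNp1, sub_self]
  have hKH : (1 - T * Np)ᴴ = 1 - T * Np := by
    rw [conjTranspose_sub, conjTranspose_one, hNp3]
  have hsum : (1 - T * Np) * Rss * (1 - T * Np)ᴴ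
      + (1 - T * Np) * Rnn * (1 - T * Np)ᴴ = 0 := by
    rw [← add_mul, ← mul_add, ← hTdef, hKH]
    rw [hKT, zero_mul]
  have hRssK : (1 - T * Np) * Rss * (1 - T * Np)ᴴ = 0 :=
    psd_add_eq_zero_left' (hss.mul_mul_conjTranspose_same (1 - T * Np))
      (hnn.mul_mul_conjTranspose_same (1 - T * Np)) hsum
  -- T Np Rss = Rss
  set S := CFC.sqrt Rss with hSdef
  have hS : S * S = Rss := CFC.sqrt_mul_sqrt_self Rss hss.nonneg
  have hSH : Sᴴ = S := (CFC.sqrt_nonneg Rss).posSemidef.1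
  have hKS : (1 - T * Np) * S = 0 := by
    rw [← self_mul_conjTranspose_eq_zero]
    calc ((1 - T * Np) * S) * ((1 - T * Np) * S)ᴴ
        = (1 - T * Np) * Rss * (1 - T * Np)ᴴ := by
          rw [conjTranspose_mul, hSH, ← hS]
          simp only [mul_assoc]
      _ = 0 := hRssK
  have h0 : (1 - T * Np) * Rss = 0 := by
    rw [← hS, ← mul_assoc, hKS, zero_mul]
  have hstar : T * Np * Rss = Rss := by
    rw [sub_mul, one_mul, sub_eq_zero] at h0
    exact h0.symm
  have hstar2 : Rss * Np * T = Rss := by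
    have := congrArg conjTranspose hstar
    simpa [conjTranspose_mul, hRssH, hTH, hNpH, mul_assoc] using this
  -- M is Hermitian
  have hMH : (Rss * Np * Rss)ᴴ = Rss * Np * Rss := by
    simp [conjTranspose_mul, hRssH, hNpH, mul_assoc]
  set M := Rss * Np * Rss with hMdef
  -- (1 - M Mp) kills M, hence kills Rss
  have hGM : (1 - M * Mp) * M = 0 := by
    rw [sub_mul, one_mul, hMp1, sub_self]
  have hGH : (1 - M * Mp)ᴴ = 1 - M * Mp := by
    rw [conjTranspose_sub, conjTranspose_one, hMp3]
  set NS := CFC.sqrt Np with hNSdef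
  have hNS : NS * NS = Np := CFC.sqrt_mul_sqrt_self Np hNppsd.nonneg
  have hNSH : NSᴴ = NS := (CFC.sqrt_nonneg Np).posSemidef.1
  have hGRN : (1 - M * Mp) * Rss * NS = 0 := by
    rw [← self_mul_conjTranspose_eq_zero]
    calc ((1 - M * Mp) * Rss * NS) * ((1 - M * Mp) * Rss * NS)ᴴ
        = (1 - M * Mp) * M * (1 - M * Mp)ᴴ := by
          rw [conjTranspose_mul, conjTranspose_mul, hNSH, hRssH, hMdef, ← hNS]
          simp only [mul_assoc]
      _ = 0 := by rw [hGM, zero_mul]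
  have hGR : (1 - M * Mp) * Rss = 0 := by
    calc (1 - M * Mp) * Rss = (1 - M * Mp) * (Rss * Np * T) := by rw [hstar2]
      _ = ((1 - M * Mp) * Rss * NS) * (NS * T) := by
          rw [← hNS]; simp only [mul_assoc]
      _ = 0 := by rw [hGRN, zero_mul]
  have hdia : M * Mp * Rss = Rss := by
    rw [sub_mul, one_mul, sub_eq_zero] at hGR
    exact hGR.symm
  -- Mp is Hermitian
  have hMpH : Mpᴴ = Mp := by
    have e1 : M * Mpᴴ = Mp * M := by
      calc M * Mpᴴ = (Mp * M)ᴴ := by rw [conjTranspose_mul, hMH]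
        _ = Mp * M := hMp4
    have e2 : Mpᴴ * M = M * Mp := by
      calc Mpᴴ * M = (M * Mp)ᴴ := by rw [conjTranspose_mul, hMH]
        _ = M * Mp := hMp3
    have c1 : M * Mpᴴ * M = M := by
      have := congrArg conjTranspose hMp1
      simpa [conjTranspose_mul, hMH, mul_assoc] using this
    have c2 : Mpᴴ * M * Mpᴴ = Mpᴴ := by
      have := congrArg conjTranspose hMp2
      simpa [conjTranspose_mul, hMH, mul_assoc] using this
    have c3 : (M * Mpᴴ)ᴴ = M * Mpᴴ := by rw [e1, hMp4]
    have c4 : (Mpᴴ * M)ᴴ = Mpᴴ * M := by rw [e2, hMp3]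
    exact pinv_unique' c1 c2 c3 c4 hMp1 hMp2 hMp3 hMp4
  -- Rss * Mp * M = Rss
  have hdia2 : Rss * (Mp * M) = Rss := by
    have := congrArg conjTranspose hdia
    simpa [conjTranspose_mul, hRssH, hMpH, hMH, mul_assoc] using this
  -- finish
  have hPQ : Mp * M * (Sp * Rss) = Mp * M := by
    have hMQ : M * (Sp * Rss) = M := by
      calc M * (Sp * Rss) = Rss * Np * (Rss * Sp * Rss) := by
            rw [hMdef]; simp only [mul_assoc]
        _ = M := by rw [hSp1, hMdef, mul_assoc]
    rw [mul_assoc, hMQ]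
  calc Mp * M = (Mp * M)ᴴ := hMp4.symm
    _ = (Mp * M * (Sp * Rss))ᴴ := by rw [hPQ]
    _ = (Sp * Rss)ᴴ * (Mp * M)ᴴ := by rw [conjTranspose_mul]
    _ = Sp * (Rss * (Mp * M)) := by rw [hSp4, hMp4, mul_assoc]
    _ = Sp * Rss := by rw [hdia2]
end
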